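/- arXiv:2605.10591 — 2 statements merged into one kernel-verified Lean document; each statement's English description precedes it below -/
import Mathlib

section
/- Assume (ND). Let p1 and p2 be two distinct solution denominators with 1 ≤ deg p2 ≤ deg p1 =: d, and assume a1 < (n1−1)·d − 1 and a2 = (n2−1)·d − 1. Then a3 = (n3−1)·d − 1; consequently (n3−n2)·d = a3 − a2, (n2−1)·d = a2 + 1, (n3−1)·d = a3 + 1, T_d = {3,2,∂}, and deg p2 = d. -/
open Polynomial

/-- Index set `{3, 2, 1, ∂}` for the terms of the generalized Abel equation. -/
inductive AbelIdx : Type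
  | I1 : AbelIdx
  | I2 : AbelIdx
  | I3 : AbelIdx
  | D  : AbelIdx
  deriving DecidableEq

instance : Fintype AbelIdx where
  elems := {AbelIdx.I1, AbelIdx.I2, AbelIdx.I3, AbelIdx.D}
  complete := fun x => by cases x <;> simp

/-- `p` is a solution denominator: `p ≠ 0` and
`p^(n3-2)·p' + A3 + A2·p^(n3-n2) + A1·p^(n3-n1) = 0`, i.e. `x = 1/p` solves the
generalized Abel equation `x' = A3 x^{n3} + A2 x^{n2} + A1 x^{n1}`. -/
def IsSolDen {𝕜 : Type*} [Field 𝕜] (n1 n2 n3 : ℕ) (A1 A2 A3 : Polynomial 𝕜)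
    (p : Polynomial 𝕜) : Prop :=
  p ≠ 0 ∧
    p ^ (n3 - 2) * Polynomial.derivative p + A3 + A2 * p ^ (n3 - n2) + A1 * p ^ (n3 - n1) = 0

/-- `Φ_ℓ(r)` for `ℓ ∈ {1,2,3,∂}`. -/
def Phi (n1 n2 n3 a1 a2 a3 r : ℕ) : AbelIdx → ℤ
  | .I1 => (n1 : ℤ) * r - a1
  | .I2 => (n2 : ℤ) * r - a2
  | .I3 => (n3 : ℤ) * r - a3
  | .D  => (r : ℤ) + 1

/-- `O_r`, the minimum of the four `Φ_ℓ(r)`. -/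
def Omin (n1 n2 n3 a1 a2 a3 r : ℕ) : ℤ :=
  min (min (Phi n1 n2 n3 a1 a2 a3 r .I1) (Phi n1 n2 n3 a1 a2 a3 r .I2))
      (min (Phi n1 n2 n3 a1 a2 a3 r .I3) (Phi n1 n2 n3 a1 a2 a3 r .D))

/-- `T_r = {ℓ : Φ_ℓ(r) = O_r}`. -/
def Tie (n1 n2 n3 a1 a2 a3 r : ℕ) : Finset AbelIdx :=
  Finset.univ.filter fun ℓ => Phi n1 n2 n3 a1 a2 a3 r ℓ = Omin n1 n2 n3 a1 a2 a3 r

/-- `r` is edge-admissible if `T_r` has at least two elements. -/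
def EdgeAdmissible (n1 n2 n3 a1 a2 a3 r : ℕ) : Prop :=
  2 ≤ (Tie n1 n2 n3 a1 a2 a3 r).card

/-- The edge polynomial `P_r(C)`. -/
noncomputable def edgePoly {𝕜 : Type*} [Field 𝕜] (n1 n2 n3 : ℕ)
    (A1 A2 A3 : Polynomial 𝕜) (r : ℕ) : Polynomial 𝕜 :=
  (if AbelIdx.I1 ∈ Tie n1 n2 n3 A1.natDegree A2.natDegree A3.natDegree r then
      Polynomial.C A1.leadingCoeff * Polynomial.X ^ n1 else 0) +
  (if AbelIdx.I2 ∈ Tie n1 n2 n3 A1.natDegree A2.natDegree A3.natDegree r then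
      Polynomial.C A2.leadingCoeff * Polynomial.X ^ n2 else 0) +
  (if AbelIdx.I3 ∈ Tie n1 n2 n3 A1.natDegree A2.natDegree A3.natDegree r then
      Polynomial.C A3.leadingCoeff * Polynomial.X ^ n3 else 0) +
  (if AbelIdx.D ∈ Tie n1 n2 n3 A1.natDegree A2.natDegree A3.natDegree r then
      (r : Polynomial 𝕜) * Polynomial.X else 0)

/-- The set `Γ` of candidate denominator degrees. -/
def Gamma (n1 n2 n3 a1 a2 a3 : ℕ) : Set ℕ :=
  {r | 0 < r ∧ ((n3 : ℤ) - n2) * r ≤ (a3 : ℤ) ∧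
    (((n3 : ℤ) - n2) * r = (a3 : ℤ) - a2 ∨
     ((n3 : ℤ) - n1) * r = (a3 : ℤ) - a1 ∨
     ((n2 : ℤ) - n1) * r = (a2 : ℤ) - a1 ∨
     ((n3 : ℤ) - 1) * r = (a3 : ℤ) + 1 ∨
     ((n2 : ℤ) - 1) * r = (a2 : ℤ) + 1 ∨
     ((n1 : ℤ) - 1) * r = (a1 : ℤ) + 1)}

/-- The nondegeneracy hypothesis (ND). -/
def ND {𝕜 : Type*} [Field 𝕜] (n1 n2 n3 : ℕ) (A1 A2 A3 : Polynomial 𝕜) : Prop :=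
  ∀ r : ℕ, r ∈ Gamma n1 n2 n3 A1.natDegree A2.natDegree A3.natDegree →
    EdgeAdmissible n1 n2 n3 A1.natDegree A2.natDegree A3.natDegree r →
    ((∀ c : 𝕜, c ≠ 0 → (edgePoly n1 n2 n3 A1 A2 A3 r).IsRoot c →
        (Polynomial.derivative (edgePoly n1 n2 n3 A1 A2 A3 r)).eval c ≠ 0) ∧
     (AbelIdx.D ∈ Tie n1 n2 n3 A1.natDegree A2.natDegree A3.natDegree r →
        ∀ c : 𝕜, c ≠ 0 → (edgePoly n1 n2 n3 A1 A2 A3 r).IsRoot c →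
          ∀ m : ℕ, 1 ≤ m →
            (Polynomial.derivative (edgePoly n1 n2 n3 A1 A2 A3 r)).eval c + (m : 𝕜) ≠ 0) ∧
     (¬ ∃ c1 c2 ζ : 𝕜, c1 ≠ 0 ∧ c2 ≠ 0 ∧
        (edgePoly n1 n2 n3 A1 A2 A3 r).IsRoot c1 ∧
        (edgePoly n1 n2 n3 A1 A2 A3 r).IsRoot c2 ∧
        ζ ≠ 1 ∧ c1 = ζ * c2 ∧
        (ζ ^ (n3 - n2) = 1 ∨ ζ ^ (n3 - n1) = 1 ∨ ζ ^ (n3 - 1) = 1)))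

/-- The power-series form `E_r(y)` of the generalized Abel equation at infinity. -/
noncomputable def abelPS {𝕜 : Type*} [Field 𝕜] (n1 n2 n3 : ℕ)
    (A1 A2 A3 : Polynomial 𝕜) (r : ℕ) (y : PowerSeries 𝕜) : PowerSeries 𝕜 :=
  PowerSeries.X ^ (((r : ℤ) + 1 - Omin n1 n2 n3 A1.natDegree A2.natDegree A3.natDegree r).toNat) *
      ((r : PowerSeries 𝕜) * y + PowerSeries.X * PowerSeries.derivativeFun y) +
  PowerSeries.X ^ ((Phi n1 n2 n3 A1.natDegree A2.natDegree A3.natDegree r AbelIdx.I1 -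
      Omin n1 n2 n3 A1.natDegree A2.natDegree A3.natDegree r).toNat) *
      (A1.reverse : PowerSeries 𝕜) * y ^ n1 +
  PowerSeries.X ^ ((Phi n1 n2 n3 A1.natDegree A2.natDegree A3.natDegree r AbelIdx.I2 -
      Omin n1 n2 n3 A1.natDegree A2.natDegree A3.natDegree r).toNat) *
      (A2.reverse : PowerSeries 𝕜) * y ^ n2 +
  PowerSeries.X ^ ((Phi n1 n2 n3 A1.natDegree A2.natDegree A3.natDegree r AbelIdx.I3 -
      Omin n1 n2 n3 A1.natDegree A2.natDegree A3.natDegree r).toNat) *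
      (A3.reverse : PowerSeries 𝕜) * y ^ n3

set_option maxHeartbeats 1600000 in
/-- Proposition 5.6, case (C1). Under (ND), for two distinct
solution denominators with `1 ≤ deg p2 ≤ deg p1 = d`, if `a1 < (n1−1)d − 1` and
`a2 = (n2−1)d − 1`, then `a3 = (n3−1)d − 1`; consequently
`d = r_{32} = r_{2∂} = r_{3∂}`, `T_d = {3,2,∂}`, and `deg p2 = d`. -/
theorem stmt11 {𝕜 : Type*} [RCLike 𝕜] (n1 n2 n3 : ℕ)
    (hn1 : 1 < n1) (hn12 : n1 < n2) (hn23 : n2 < n3)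
    (A1 A2 A3 : Polynomial 𝕜) (hA1 : A1 ≠ 0) (hA2 : A2 ≠ 0) (hA3 : A3 ≠ 0)
    (hND : ND n1 n2 n3 A1 A2 A3)
    (p1 p2 : Polynomial 𝕜)
    (h1 : IsSolDen n1 n2 n3 A1 A2 A3 p1) (h2 : IsSolDen n1 n2 n3 A1 A2 A3 p2)
    (hne : p1 ≠ p2) (hd2 : 1 ≤ p2.natDegree) (hd21 : p2.natDegree ≤ p1.natDegree)
    (ha1 : (A1.natDegree : ℤ) < ((n1 : ℤ) - 1) * p1.natDegree - 1)
    (ha2 : (A2.natDegree : ℤ) = ((n2 : ℤ) - 1) * p1.natDegree - 1) :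
    (A3.natDegree : ℤ) = ((n3 : ℤ) - 1) * p1.natDegree - 1 ∧
    ((n3 : ℤ) - n2) * p1.natDegree = (A3.natDegree : ℤ) - A2.natDegree ∧
    ((n2 : ℤ) - 1) * p1.natDegree = (A2.natDegree : ℤ) + 1 ∧
    ((n3 : ℤ) - 1) * p1.natDegree = (A3.natDegree : ℤ) + 1 ∧
    Tie n1 n2 n3 A1.natDegree A2.natDegree A3.natDegree p1.natDegree =
      {AbelIdx.I3, AbelIdx.I2, AbelIdx.D} ∧
    p2.natDegree = p1.natDegree := by
  classical
  obtain ⟨hp1ne, heq1⟩ := h1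
  obtain ⟨hp2ne, heq2⟩ := h2
  have hd : 1 ≤ p1.natDegree := le_trans hd2 hd21
  -- ℕ form of ha2
  have hA2n : A2.natDegree + 1 = (n2 - 1) * p1.natDegree := by
    have h : ((A2.natDegree + 1 : ℕ) : ℤ) = (((n2 - 1) * p1.natDegree : ℕ) : ℤ) := by
      push_cast [Nat.cast_sub (show 1 ≤ n2 by omega)]
      linarith
    exact_mod_cast h
  -- divisibility: (n3 - n2) * d ≤ a3
  have hfac : A3 = -(p1 ^ (n3 - n2) *
      (p1 ^ (n2 - 2) * derivative p1 + A2 + A1 * p1 ^ (n2 - n1))) := by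
    have e1 : p1 ^ (n3 - 2) = p1 ^ (n3 - n2) * p1 ^ (n2 - 2) := by
      rw [← pow_add]; congr 1; omega
    have e2 : p1 ^ (n3 - n1) = p1 ^ (n3 - n2) * p1 ^ (n2 - n1) := by
      rw [← pow_add]; congr 1; omega
    have heq1' := heq1
    rw [e1, e2] at heq1'
    linear_combination heq1'
  have hBne : p1 ^ (n2 - 2) * derivative p1 + A2 + A1 * p1 ^ (n2 - n1) ≠ 0 := by
    intro h0
    exact hA3 (by rw [hfac, h0, mul_zero, neg_zero])
  have hdiv : (n3 - n2) * p1.natDegree ≤ A3.natDegree := by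
    rw [hfac, natDegree_neg, natDegree_mul (pow_ne_zero _ hp1ne) hBne, natDegree_pow]
    exact Nat.le_add_right _ _
  -- index identities
  have F1 : A2.natDegree + (n3 - n2) * p1.natDegree
      = (n3 - 2) * p1.natDegree + (p1.natDegree - 1) := by
    have h := hA2n
    zify [show n2 ≤ n3 by omega, show 2 ≤ n3 by omega, hd, show 1 ≤ n2 by omega] at h ⊢
    linarith
  have F2 : A1.natDegree + (n3 - n1) * p1.natDegree
      < (n3 - 2) * p1.natDegree + (p1.natDegree - 1) := by
    zify [show n1 ≤ n3 by omega, show 2 ≤ n3 by omega, hd]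
    linarith
  -- upper bound on a3
  have h3eq : A3 = -(p1 ^ (n3 - 2) * derivative p1 + A2 * p1 ^ (n3 - n2)
      + A1 * p1 ^ (n3 - n1)) := by
    linear_combination heq1
  have hub : A3.natDegree ≤ (n3 - 2) * p1.natDegree + (p1.natDegree - 1) := by
    rw [h3eq, natDegree_neg]
    refine (natDegree_add_le _ _).trans
      (max_le ((natDegree_add_le _ _).trans (max_le ?_ ?_)) ?_)
    · refine natDegree_mul_le.trans ?_
      rw [natDegree_pow]
      exact Nat.add_le_add le_rfl (natDegree_derivative_le p1)
    · refine natDegree_mul_le.trans ?_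
      rw [natDegree_pow]
      exact F1.le
    · refine natDegree_mul_le.trans ?_
      rw [natDegree_pow]
      exact F2.le
  -- the key degree identity for a3
  have key : A3.natDegree = (n3 - 2) * p1.natDegree + (p1.natDegree - 1) := by
    by_contra hne3
    have hlt : A3.natDegree < (n3 - 2) * p1.natDegree + (p1.natDegree - 1) :=
      lt_of_le_of_ne hub hne3
    have hL : p1.leadingCoeff ≠ 0 := leadingCoeff_ne_zero.mpr hp1ne
    have hdcast : ((p1.natDegree : 𝕜)) ≠ 0 := Nat.cast_ne_zero.mpr (by omega)
    have hder : (derivative p1).coeff (p1.natDegree - 1)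
        = p1.leadingCoeff * p1.natDegree := by
      have h := coeff_derivative p1 (p1.natDegree - 1)
      rw [show p1.natDegree - 1 + 1 = p1.natDegree by omega] at h
      rw [h, coeff_natDegree]
      push_cast [Nat.cast_sub hd]
      ring
    have hdne : (derivative p1).natDegree = p1.natDegree - 1 := by
      refine le_antisymm (natDegree_derivative_le p1) (le_natDegree_of_ne_zero ?_)
      rw [hder]
      exact mul_ne_zero hL hdcast
    have hderlc : (derivative p1).leadingCoeff = p1.leadingCoeff * p1.natDegree := by
      rw [← coeff_natDegree, hdne, hder]
    have hcd := coeff_mul_degree_add_degree (p1 ^ (n3 - 2)) (derivative p1)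
    rw [natDegree_pow, hdne, leadingCoeff_pow, hderlc] at hcd
    have hc2 := coeff_mul_degree_add_degree A2 (p1 ^ (n3 - n2))
    rw [natDegree_pow, leadingCoeff_pow, F1] at hc2
    have hA1small : (A1 * p1 ^ (n3 - n1)).natDegree
        < (n3 - 2) * p1.natDegree + (p1.natDegree - 1) := by
      have hb := natDegree_mul_le (p := A1) (q := p1 ^ (n3 - n1))
      rw [natDegree_pow] at hb
      exact lt_of_le_of_lt hb F2
    have hkey := congrArg
      (fun q : Polynomial 𝕜 => q.coeff ((n3 - 2) * p1.natDegree + (p1.natDegree - 1))) heq1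
    simp only [coeff_add, coeff_zero] at hkey
    rw [hcd, hc2, coeff_eq_zero_of_natDegree_lt hlt,
      coeff_eq_zero_of_natDegree_lt hA1small] at hkey
    -- hkey : L^(n3-2) * (L * d) + 0 + α2 * L^(n3-n2) + 0 = 0
    have hpoweq : p1.leadingCoeff ^ (n3 - 2) * p1.leadingCoeff
        = p1.leadingCoeff ^ (n3 - n2) * p1.leadingCoeff ^ (n2 - 1) := by
      rw [← pow_succ, ← pow_add]
      congr 1
      omega
    have h2 : p1.leadingCoeff ^ (n3 - n2) *
        (p1.leadingCoeff ^ (n2 - 1) * p1.natDegree + A2.leadingCoeff) = 0 := by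
      linear_combination hkey - (p1.natDegree : 𝕜) * hpoweq
    have hα2 : A2.leadingCoeff = -(p1.leadingCoeff ^ (n2 - 1) * p1.natDegree) := by
      have h3 := (mul_eq_zero.mp h2).resolve_left (pow_ne_zero _ hL)
      linear_combination h3
    -- Tie at d is {I2, D}
    have hΦ1 : ((p1.natDegree : ℤ) + 1) < (n1 : ℤ) * p1.natDegree - A1.natDegree := by
      linarith
    have hΦ2 : (n2 : ℤ) * p1.natDegree - A2.natDegree = (p1.natDegree : ℤ) + 1 := by
      linarith
    have hΦ3 : ((p1.natDegree : ℤ) + 1) < (n3 : ℤ) * p1.natDegree - A3.natDegree := by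
      have hz : (A3.natDegree : ℤ) < ((n3 : ℤ) - 2) * p1.natDegree + (p1.natDegree - 1) := by
        have h := hlt
        zify [show 2 ≤ n3 by omega, hd] at h
        linarith
      linarith
    have hOm : Omin n1 n2 n3 A1.natDegree A2.natDegree A3.natDegree p1.natDegree
        = (p1.natDegree : ℤ) + 1 := by
      unfold Omin
      apply le_antisymm
      · exact le_trans (min_le_right _ _) (min_le_right _ _)
      · refine le_min (le_min ?_ ?_) (le_min ?_ ?_) <;> simp only [Phi] <;> linarith
    have hTie : Tie n1 n2 n3 A1.natDegree A2.natDegree A3.natDegree p1.natDegree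
        = {AbelIdx.I2, AbelIdx.D} := by
      ext ℓ
      cases ℓ <;>
        simp only [Tie, Finset.mem_filter, Finset.mem_univ, true_and, hOm, Phi,
          Finset.mem_insert, Finset.mem_singleton, reduceCtorEq, or_false, false_or,
          or_self, iff_false, iff_true]
      · intro h; linarith
      · linarith
      · intro h; linarith
    have hEA : EdgeAdmissible n1 n2 n3 A1.natDegree A2.natDegree A3.natDegree p1.natDegree := by
      rw [EdgeAdmissible, hTie]; decide
    have hGam : p1.natDegree ∈ Gamma n1 n2 n3 A1.natDegree A2.natDegree A3.natDegree := by
      refine ⟨by omega, ?_, Or.inr (Or.inr (Or.inr (Or.inr (Or.inl ?_))))⟩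
      · have h := hdiv
        zify [show n2 ≤ n3 by omega] at h
        linarith
      · linarith
    have hEP : edgePoly n1 n2 n3 A1 A2 A3 p1.natDegree =
        C A2.leadingCoeff * X ^ n2 + (p1.natDegree : Polynomial 𝕜) * X := by
      simp [edgePoly, hTie]
    have hc : (p1.leadingCoeff)⁻¹ ≠ 0 := inv_ne_zero hL
    have hcpow : A2.leadingCoeff * ((p1.leadingCoeff)⁻¹) ^ (n2 - 1)
        = -(p1.natDegree : 𝕜) := by
      rw [hα2, inv_pow]
      have hp : p1.leadingCoeff ^ (n2 - 1) ≠ 0 := pow_ne_zero _ hL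
      field_simp
    have hroot : (edgePoly n1 n2 n3 A1 A2 A3 p1.natDegree).IsRoot (p1.leadingCoeff)⁻¹ := by
      rw [IsRoot, hEP]
      simp only [eval_add, eval_mul, eval_pow, eval_C, eval_X, eval_natCast]
      rw [show n2 = (n2 - 1) + 1 by omega, pow_succ]
      linear_combination (p1.leadingCoeff)⁻¹ * hcpow
    have hdereval : (derivative (edgePoly n1 n2 n3 A1 A2 A3 p1.natDegree)).eval
        (p1.leadingCoeff)⁻¹
        = (n2 : 𝕜) * (A2.leadingCoeff * ((p1.leadingCoeff)⁻¹) ^ (n2 - 1))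
          + (p1.natDegree : 𝕜) := by
      rw [hEP]
      simp [derivative_add, derivative_mul, derivative_X_pow]
      ring
    obtain ⟨nd1, nd2', nd3⟩ := hND p1.natDegree hGam hEA
    refine absurd ?_ (nd2' (by rw [hTie]; decide) _ hc hroot ((n2 - 1) * p1.natDegree)
      (Nat.one_le_iff_ne_zero.mpr (Nat.mul_ne_zero (by omega) (by omega))))
    rw [hdereval, hcpow]
    push_cast [Nat.cast_sub (show 1 ≤ n2 by omega)]
    ring
  -- now the conclusions
  have ha3z : (A3.natDegree : ℤ) = ((n3 : ℤ) - 1) * p1.natDegree - 1 := by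
    have h := key
    zify [show 2 ≤ n3 by omega, hd] at h
    linarith
  have hΦ1 : ((p1.natDegree : ℤ) + 1) < (n1 : ℤ) * p1.natDegree - A1.natDegree := by
    linarith
  have hΦ2 : (n2 : ℤ) * p1.natDegree - A2.natDegree = (p1.natDegree : ℤ) + 1 := by
    linarith
  have hΦ3 : (n3 : ℤ) * p1.natDegree - A3.natDegree = (p1.natDegree : ℤ) + 1 := by
    linarith
  have hOm : Omin n1 n2 n3 A1.natDegree A2.natDegree A3.natDegree p1.natDegree
      = (p1.natDegree : ℤ) + 1 := by
    unfold Omin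
    apply le_antisymm
    · exact le_trans (min_le_right _ _) (min_le_right _ _)
    · refine le_min (le_min ?_ ?_) (le_min ?_ ?_) <;> simp only [Phi] <;> linarith
  have hTie : Tie n1 n2 n3 A1.natDegree A2.natDegree A3.natDegree p1.natDegree
      = {AbelIdx.I3, AbelIdx.I2, AbelIdx.D} := by
    ext ℓ
    cases ℓ <;>
      simp only [Tie, Finset.mem_filter, Finset.mem_univ, true_and, hOm, Phi,
        Finset.mem_insert, Finset.mem_singleton, reduceCtorEq, or_false, false_or,
        or_self, iff_false, iff_true]
    · intro h; linarith
    · linarith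
    · linarith
  refine ⟨ha3z, by linarith, by linarith, by linarith, hTie, ?_⟩
  -- deg p2 = d
  by_contra hne2
  have he : p2.natDegree < p1.natDegree := lt_of_le_of_ne hd21 hne2
  have bd : (p2 ^ (n3 - 2) * derivative p2).natDegree < A3.natDegree := by
    have hb := natDegree_mul_le (p := p2 ^ (n3 - 2)) (q := derivative p2)
    rw [natDegree_pow] at hb
    calc (p2 ^ (n3 - 2) * derivative p2).natDegree
        ≤ (n3 - 2) * p2.natDegree + (p2.natDegree - 1) :=
          hb.trans (Nat.add_le_add le_rfl (natDegree_derivative_le p2))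
      _ < (n3 - 2) * p1.natDegree + (p1.natDegree - 1) := by
          have h := Nat.mul_le_mul_left (n3 - 2) he.le
          omega
      _ = A3.natDegree := key.symm
  have b2 : (A2 * p2 ^ (n3 - n2)).natDegree < A3.natDegree := by
    have hb := natDegree_mul_le (p := A2) (q := p2 ^ (n3 - n2))
    rw [natDegree_pow] at hb
    refine lt_of_le_of_lt hb ?_
    have hp : ((n3 : ℤ) - n2) * p2.natDegree < ((n3 : ℤ) - n2) * p1.natDegree := by
      refine mul_lt_mul_of_pos_left (by exact_mod_cast he) ?_
      have : (n2 : ℤ) < n3 := by exact_mod_cast hn23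
      linarith
    zify [show n2 ≤ n3 by omega]
    linarith
  have b1 : (A1 * p2 ^ (n3 - n1)).natDegree < A3.natDegree := by
    have hb := natDegree_mul_le (p := A1) (q := p2 ^ (n3 - n1))
    rw [natDegree_pow] at hb
    calc (A1 * p2 ^ (n3 - n1)).natDegree
        ≤ A1.natDegree + (n3 - n1) * p2.natDegree := hb
      _ ≤ A1.natDegree + (n3 - n1) * p1.natDegree :=
          Nat.add_le_add le_rfl (Nat.mul_le_mul_left _ he.le)
      _ < (n3 - 2) * p1.natDegree + (p1.natDegree - 1) := F2
      _ = A3.natDegree := key.symm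
  have hkey := congrArg (fun q : Polynomial 𝕜 => q.coeff A3.natDegree) heq2
  simp only [coeff_add, coeff_zero] at hkey
  rw [coeff_eq_zero_of_natDegree_lt bd, coeff_eq_zero_of_natDegree_lt b2,
    coeff_eq_zero_of_natDegree_lt b1, coeff_natDegree] at hkey
  simp only [zero_add, add_zero] at hkey
  exact hA3 (leadingCoeff_eq_zero.mp hkey)
end

section
/- Assume there exist at least three distinct solution denominators of degree ≥ 1 (that is, at least three distinct nonconstant rational solutions of the generalized Abel equation). Then the set { deg p : p is a solution denominator with deg p ≥ 1 } has at most three elements. -/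
open Polynomial

section MyAux

open Polynomial

/-- Slopes of the four degree lines. -/
def mSlope (n1 n2 n3 : ℕ) : AbelIdx → ℤ
  | .I1 => (n3 : ℤ) - n1
  | .I2 => (n3 : ℤ) - n2
  | .I3 => 0
  | .D  => (n3 : ℤ) - 1

/-- Intercepts of the four degree lines. -/
def cInt (a1 a2 a3 : ℕ) : AbelIdx → ℤ
  | .I1 => a1
  | .I2 => a2
  | .I3 => a3
  | .D  => -1

lemma mSlope_inj {n1 n2 n3 : ℕ} (hn1 : 1 < n1) (hn12 : n1 < n2) (hn23 : n2 < n3) :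
    Function.Injective (mSlope n1 n2 n3) := by
  intro a b h
  cases a <;> cases b <;> simp only [mSlope] at h <;> first | rfl | (exfalso; omega)

/-- If four nonzero polynomials sum to zero, the max natDegree is attained twice. -/
lemma tie4 {𝕜 : Type*} [Field 𝕜] (f : AbelIdx → Polynomial 𝕜) (h0 : ∀ i, f i ≠ 0)
    (hsum : f .D + f .I3 + f .I2 + f .I1 = 0) :
    ∃ i j : AbelIdx, i ≠ j ∧ (f i).natDegree = (f j).natDegree ∧
      ∀ k, (f k).natDegree ≤ (f i).natDegree := by
  obtain ⟨i, -, hmax⟩ := Finset.exists_max_image Finset.univ (fun k => (f k).natDegree)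
    ⟨AbelIdx.D, Finset.mem_univ _⟩
  have hmax' : ∀ k, (f k).natDegree ≤ (f i).natDegree := fun k => hmax k (Finset.mem_univ _)
  have hj : ∃ j, j ≠ i ∧ (f j).natDegree = (f i).natDegree := by
    by_contra hcon
    push_neg at hcon
    have hlt : ∀ j, j ≠ i → (f j).coeff (f i).natDegree = 0 := fun j hji =>
      Polynomial.coeff_eq_zero_of_natDegree_lt (lt_of_le_of_ne (hmax' j) (hcon j hji))
    have h2 : (f .D).coeff (f i).natDegree + (f .I3).coeff (f i).natDegree +
        (f .I2).coeff (f i).natDegree + (f .I1).coeff (f i).natDegree = 0 := by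
      have := congrArg (fun q => q.coeff (f i).natDegree) hsum
      simpa using this
    have hlc : (f i).coeff (f i).natDegree ≠ 0 := by
      simpa [Polynomial.coeff_natDegree] using Polynomial.leadingCoeff_ne_zero.mpr (h0 i)
    cases i with
    | I1 =>
        rw [hlt .D (by decide), hlt .I3 (by decide), hlt .I2 (by decide)] at h2
        simp only [zero_add] at h2
        exact hlc h2
    | I2 =>
        rw [hlt .D (by decide), hlt .I3 (by decide), hlt .I1 (by decide)] at h2
        simp only [zero_add, add_zero] at h2
        exact hlc h2
    | I3 =>
        rw [hlt .D (by decide), hlt .I2 (by decide), hlt .I1 (by decide)] at h2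
        simp only [zero_add, add_zero] at h2
        exact hlc h2
    | D =>
        rw [hlt .I3 (by decide), hlt .I2 (by decide), hlt .I1 (by decide)] at h2
        simp only [add_zero] at h2
        exact hlc h2
  obtain ⟨j, hji, hdeg⟩ := hj
  exact ⟨i, j, hji.symm, hdeg.symm, hmax'⟩

/-- The upper envelope of four lines with distinct slopes has at most 3 tie points. -/
lemma envelope3 (m c : AbelIdx → ℤ) (hm : Function.Injective m) :
    {r : ℕ | ∃ i j : AbelIdx, i ≠ j ∧ m i * r + c i = m j * r + c j ∧
        ∀ k, m k * r + c k ≤ m i * r + c i}.Finite ∧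
    {r : ℕ | ∃ i j : AbelIdx, i ≠ j ∧ m i * r + c i = m j * r + c j ∧
        ∀ k, m k * r + c k ≤ m i * r + c i}.ncard ≤ 3 := by
  classical
  set T : Set ℕ := {r : ℕ | ∃ i j : AbelIdx, i ≠ j ∧ m i * r + c i = m j * r + c j ∧
        ∀ k, m k * r + c k ≤ m i * r + c i} with hT
  set S : ℕ → Finset AbelIdx :=
    fun r => Finset.univ.filter (fun i => ∀ k, m k * r + c k ≤ m i * r + c i) with hS
  -- choice of a min-slope maximizer
  have H : ∀ r : ℕ, ∃ i : AbelIdx, (S r).Nonempty → (i ∈ S r ∧ ∀ j ∈ S r, m i ≤ m j) := by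
    intro r
    by_cases h : (S r).Nonempty
    · obtain ⟨i, hi, hmin⟩ := Finset.exists_min_image (S r) m h
      exact ⟨i, fun _ => ⟨hi, hmin⟩⟩
    · exact ⟨.I1, fun h' => absurd h' h⟩
  choose φ hφ using H
  -- for r ∈ T, S r is nonempty and has two distinct elements
  have hmemT : ∀ r ∈ T, ∃ i j, i ≠ j ∧ i ∈ S r ∧ j ∈ S r := by
    intro r hr
    obtain ⟨i, j, hij, heq, hmaxi⟩ := hr
    have hiS : i ∈ S r := by
      simp only [hS, Finset.mem_filter, Finset.mem_univ, true_and]; exact hmaxi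
    have hjS : j ∈ S r := by
      simp only [hS, Finset.mem_filter, Finset.mem_univ, true_and]
      intro k; rw [← heq]; exact hmaxi k
    exact ⟨i, j, hij, hiS, hjS⟩
  -- kill lemma
  have kill : ∀ r r' : ℕ, r < r' → ∀ i j, i ∈ S r → j ∈ S r → m i < m j → i ∉ S r' := by
    intro r r' hrr i j hi hj hij hi'
    simp only [hS, Finset.mem_filter, Finset.mem_univ, true_and] at hi hj hi'
    have e1 : m i * r + c i = m j * r + c j := le_antisymm (hj i) (hi j)
    have e2 : m j * r' + c j ≤ m i * r' + c i := hi' j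
    have hrr' : (r : ℤ) < (r' : ℤ) := by exact_mod_cast hrr
    nlinarith [mul_pos (sub_pos.mpr hij) (sub_pos.mpr hrr')]
  -- for r ∈ T, φ r ∈ S r and there is a strictly larger slope in S r
  have hφT : ∀ r ∈ T, φ r ∈ S r ∧ ∃ j ∈ S r, m (φ r) < m j := by
    intro r hr
    obtain ⟨i, j, hij, hiS, hjS⟩ := hmemT r hr
    obtain ⟨hφS, hφmin⟩ := hφ r ⟨i, hiS⟩
    by_cases hcase : φ r = i
    · by_cases hcase2 : φ r = j
      · exact absurd (hcase ▸ hcase2 ▸ rfl : i = j) hij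
      · exact ⟨hφS, j, hjS, lt_of_le_of_ne (hφmin j hjS) (fun h => hcase2 (hm h))⟩
    · exact ⟨hφS, i, hiS, lt_of_le_of_ne (hφmin i hiS) (fun h => hcase (hm h))⟩
  -- φ is injective on T
  have key : ∀ r r', r ∈ T → r' ∈ T → r < r' → φ r ≠ φ r' := by
    intro r r' hr hr' hlt heq
    obtain ⟨hφS, j, hjS, hjlt⟩ := hφT r hr
    obtain ⟨hφS', -⟩ := hφT r' hr'
    exact kill r r' hlt (φ r) j hφS hjS hjlt (heq ▸ hφS')
  have hinj : Set.InjOn φ T := by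
    intro r hr r' hr' heq
    by_contra hne
    rcases lt_or_gt_of_ne hne with h | h
    · exact key r r' hr hr' h heq
    · exact key r' r hr' hr h heq.symm
  -- φ never hits the max-slope index
  obtain ⟨imax, -, himax⟩ := Finset.exists_max_image Finset.univ m ⟨AbelIdx.I1, Finset.mem_univ _⟩
  have hsub : φ '' T ⊆ (Set.univ \ {imax} : Set AbelIdx) := by
    rintro x ⟨r, hr, rfl⟩
    obtain ⟨-, j, -, hjlt⟩ := hφT r hr
    refine ⟨Set.mem_univ _, fun hx => ?_⟩
    simp only [Set.mem_singleton_iff] at hx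
    rw [hx] at hjlt
    exact absurd hjlt (not_lt.mpr (himax j (Finset.mem_univ _)))
  have hcard3 : (Set.univ \ {imax} : Set AbelIdx).ncard = 3 := by
    rw [Set.ncard_diff_singleton_of_mem (Set.mem_univ _), Set.ncard_univ,
      Nat.card_eq_fintype_card]
    rfl
  have hfinim : (φ '' T).Finite := Set.toFinite _
  have hTfin : T.Finite := Set.Finite.of_finite_image hfinim hinj
  refine ⟨hTfin, ?_⟩
  calc T.ncard = (φ '' T).ncard := (Set.ncard_image_of_injOn hinj).symm
    _ ≤ (Set.univ \ {imax} : Set AbelIdx).ncard := Set.ncard_le_ncard hsub (Set.toFinite _)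
    _ = 3 := hcard3

end MyAux

/-- Corollary 5.12. If there are at least three distinct
nonconstant rational solutions (i.e. three distinct solution denominators of degree
`≥ 1`), then the set of realized denominator degrees has at most three elements. -/

theorem stmt17 {𝕜 : Type*} [RCLike 𝕜] (n1 n2 n3 : ℕ)
    (hn1 : 1 < n1) (hn12 : n1 < n2) (hn23 : n2 < n3)
    (A1 A2 A3 : Polynomial 𝕜) (hA1 : A1 ≠ 0) (hA2 : A2 ≠ 0) (hA3 : A3 ≠ 0)
    (hthree : ∃ p1 p2 p3 : Polynomial 𝕜,
      IsSolDen n1 n2 n3 A1 A2 A3 p1 ∧ IsSolDen n1 n2 n3 A1 A2 A3 p2 ∧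
      IsSolDen n1 n2 n3 A1 A2 A3 p3 ∧
      1 ≤ p1.natDegree ∧ 1 ≤ p2.natDegree ∧ 1 ≤ p3.natDegree ∧
      p1 ≠ p2 ∧ p1 ≠ p3 ∧ p2 ≠ p3) :
    {d : ℕ | ∃ p : Polynomial 𝕜,
        IsSolDen n1 n2 n3 A1 A2 A3 p ∧ 1 ≤ p.natDegree ∧ p.natDegree = d}.Finite ∧
    {d : ℕ | ∃ p : Polynomial 𝕜,
        IsSolDen n1 n2 n3 A1 A2 A3 p ∧ 1 ≤ p.natDegree ∧ p.natDegree = d}.ncard ≤ 3 := by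
  classical
  have hm := mSlope_inj hn1 hn12 hn23
  obtain ⟨hfin, hle⟩ := envelope3 (mSlope n1 n2 n3) (cInt A1.natDegree A2.natDegree A3.natDegree) hm
  have hsub : {d : ℕ | ∃ p : Polynomial 𝕜,
        IsSolDen n1 n2 n3 A1 A2 A3 p ∧ 1 ≤ p.natDegree ∧ p.natDegree = d} ⊆
      {r : ℕ | ∃ i j : AbelIdx, i ≠ j ∧
        mSlope n1 n2 n3 i * r + cInt A1.natDegree A2.natDegree A3.natDegree i =
          mSlope n1 n2 n3 j * r + cInt A1.natDegree A2.natDegree A3.natDegree j ∧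
        ∀ k, mSlope n1 n2 n3 k * r + cInt A1.natDegree A2.natDegree A3.natDegree k ≤
          mSlope n1 n2 n3 i * r + cInt A1.natDegree A2.natDegree A3.natDegree i} := by
    rintro d ⟨p, ⟨hp0, heq⟩, hd1, rfl⟩
    have hp' : Polynomial.derivative p ≠ 0 := fun h => by
      have := Polynomial.natDegree_eq_zero_of_derivative_eq_zero h
      omega
    set f : AbelIdx → Polynomial 𝕜 := fun k => match k with
      | .I1 => A1 * p ^ (n3 - n1)
      | .I2 => A2 * p ^ (n3 - n2)
      | .I3 => A3
      | .D => p ^ (n3 - 2) * Polynomial.derivative p with hf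
    have h0 : ∀ i, f i ≠ 0 := by
      intro i
      cases i with
      | I1 => exact mul_ne_zero hA1 (pow_ne_zero _ hp0)
      | I2 => exact mul_ne_zero hA2 (pow_ne_zero _ hp0)
      | I3 => exact hA3
      | D => exact mul_ne_zero (pow_ne_zero _ hp0) hp'
    have hsum : f .D + f .I3 + f .I2 + f .I1 = 0 := heq
    obtain ⟨i, j, hij, hdegeq, hdegmax⟩ := tie4 f h0 hsum
    have hpd : (Polynomial.derivative p).natDegree = p.natDegree - 1 :=
      Polynomial.natDegree_eq_of_degree_eq_some (Polynomial.degree_derivative_eq p (by omega))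
    have hval : ∀ k, ((f k).natDegree : ℤ) =
        mSlope n1 n2 n3 k * p.natDegree + cInt A1.natDegree A2.natDegree A3.natDegree k := by
      intro k
      cases k with
      | I1 =>
          show ((A1 * p ^ (n3 - n1)).natDegree : ℤ) = _
          rw [Polynomial.natDegree_mul hA1 (pow_ne_zero _ hp0), Polynomial.natDegree_pow]
          simp only [mSlope, cInt]
          rw [Nat.cast_add, Nat.cast_mul, Nat.cast_sub (by omega : n1 ≤ n3)]
          ring
      | I2 =>
          show ((A2 * p ^ (n3 - n2)).natDegree : ℤ) = _
          rw [Polynomial.natDegree_mul hA2 (pow_ne_zero _ hp0), Polynomial.natDegree_pow]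
          simp only [mSlope, cInt]
          rw [Nat.cast_add, Nat.cast_mul, Nat.cast_sub (by omega : n2 ≤ n3)]
          ring
      | I3 =>
          show ((A3.natDegree : ℤ)) = _
          simp only [mSlope, cInt]
          ring
      | D =>
          show (((p ^ (n3 - 2) * Polynomial.derivative p).natDegree : ℤ)) = _
          rw [Polynomial.natDegree_mul (pow_ne_zero _ hp0) hp', Polynomial.natDegree_pow, hpd]
          simp only [mSlope, cInt]
          rw [Nat.cast_add, Nat.cast_mul, Nat.cast_sub (by omega : 2 ≤ n3),
            Nat.cast_sub hd1]
          push_cast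
          ring
    refine ⟨i, j, hij, ?_, fun k => ?_⟩
    · rw [← hval i, ← hval j]; exact_mod_cast hdegeq
    · rw [← hval i, ← hval k]; exact_mod_cast hdegmax k
  exact ⟨hfin.subset hsub, le_trans (Set.ncard_le_ncard hsub hfin) hle⟩
end
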